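/- Let H : ℝ → ℝ be the Heaviside function with H(y) = 1 for y > 0 and H(y) = 0 for y ≤ 0, and let ω₁ ∈ ℝ. Define F₁(τ) = −cos τ·(1 − H(τ − π/2) + H(τ − 3π/2)) + 2ω₁·cos τ. Then ∫_0^{2π} F₁(τ)·cos τ dτ = 2π·ω₁ − π/2; in particular this integral vanishes if and only if ω₁ = 1/4. -/

import Mathlib

/-!
Expanding, `F₁ ω₁ τ * cos τ = (2ω₁ - 1) cos² τ + H (τ - π/2) cos² τ - H (τ - 3π/2) cos² τ`, and a
factor `H (τ - c)` merely cuts the integral down to `[c, 2π]`. So the integral is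
`(2ω₁ - 1) π + 3π/4 - π/4`, the three values of `∫ cos²` over `[0, 2π]`, `[π/2, 2π]`, `[3π/2, 2π]`.
-/

open Real MeasureTheory

/-- Heaviside function: `H y = 1` for `y > 0`, `H y = 0` for `y ≤ 0`. -/
noncomputable def H (y : ℝ) : ℝ := if 0 < y then 1 else 0

/-- Forcing of the first-order Lindstedt–Poincaré equation restricted to one
period `[0, 2π]`. -/
noncomputable def F₁ (ω₁ τ : ℝ) : ℝ :=
  -Real.cos τ * (1 - H (τ - π / 2) + H (τ - 3 * π / 2)) + 2 * ω₁ * Real.cos τ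

open Set intervalIntegral

lemma H_sub_mul_eq_indicator (c : ℝ) (f : ℝ → ℝ) :
    (fun τ => H (τ - c) * f τ) = (Ioi c).indicator f := by
  ext τ
  by_cases hτ : c < τ <;> simp [H, indicator, hτ, sub_pos]

lemma IntervalIntegrable.H_sub_mul {f : ℝ → ℝ} {a b : ℝ} (c : ℝ)
    (hf : IntervalIntegrable f volume a b) :
    IntervalIntegrable (fun τ => H (τ - c) * f τ) volume a b := by
  rw [H_sub_mul_eq_indicator, intervalIntegrable_iff]
  exact (intervalIntegrable_iff.mp hf).indicator measurableSet_Ioi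

lemma integral_H_sub_mul (f : ℝ → ℝ) {a b c : ℝ} (hac : a ≤ c) (hcb : c ≤ b) :
    ∫ τ in a..b, H (τ - c) * f τ = ∫ τ in c..b, f τ := by
  rw [H_sub_mul_eq_indicator, integral_of_le (hac.trans hcb), integral_of_le hcb,
    setIntegral_indicator measurableSet_Ioi, Ioc_inter_Ioi, max_eq_right hac]

lemma F₁_mul_cos (ω₁ τ : ℝ) :
    F₁ ω₁ τ * cos τ = (2 * ω₁ - 1) * cos τ ^ 2 + H (τ - π / 2) * cos τ ^ 2
      - H (τ - 3 * π / 2) * cos τ ^ 2 := by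
  simp only [F₁]; ring

lemma cos_three_pi_div_two : cos (3 * π / 2) = 0 := by
  rw [show 3 * π / 2 = π / 2 + π by ring, cos_add_pi, cos_pi_div_two, neg_zero]

theorem integral_F₁_mul_cos (ω₁ : ℝ) :
    ∫ τ in (0 : ℝ)..(2 * π), F₁ ω₁ τ * cos τ = 2 * π * ω₁ - π / 2 := by
  have hπ := pi_pos
  have hcos_sq {a b : ℝ} : IntervalIntegrable (fun τ => cos τ ^ 2) volume a b :=
    (continuous_cos.pow 2).intervalIntegrable a b
  simp_rw [F₁_mul_cos]
  rw [integral_sub ((hcos_sq.const_mul _).add (hcos_sq.H_sub_mul _)) (hcos_sq.H_sub_mul _),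
    integral_add (hcos_sq.const_mul _) (hcos_sq.H_sub_mul _), intervalIntegral.integral_const_mul,
    integral_H_sub_mul _ (by linarith) (by linarith),
    integral_H_sub_mul _ (by linarith) (by linarith), integral_cos_sq, integral_cos_sq,
    integral_cos_sq]
  simp only [cos_three_pi_div_two, cos_pi_div_two, sin_two_pi, cos_zero, sin_zero]
  ring

theorem stmt_3 (ω₁ : ℝ) :
    (∫ τ in (0 : ℝ)..(2 * π), F₁ ω₁ τ * Real.cos τ) = 2 * π * ω₁ - π / 2 ∧
    ((∫ τ in (0 : ℝ)..(2 * π), F₁ ω₁ τ * Real.cos τ) = 0 ↔ ω₁ = 1 / 4) := by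
  refine ⟨integral_F₁_mul_cos ω₁, ?_⟩
  rw [integral_F₁_mul_cos, sub_eq_zero, show π / 2 = 2 * π * (1 / 4) by ring]
  exact mul_right_inj' (by positivity)
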